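/- arXiv:2412.08165 — 6 statements merged into one kernel-verified Lean document; each statement's English description precedes it below -/
import Mathlib

section
/- Let {A, B} be an s-well-separated pair in a metric space with |B| ≥ 2. For any point a ∈ A and any two distinct points b, c ∈ B, the perimeter of the triangle Δ_{abc} is at most (1 + 2/s) times the minimum perimeter over all triangles containing a and b with third vertex in the whole point set P ⊇ A ∪ B, i.e., |Δ_{abc}| ≤ (1 + 2/s)·|Δ*(a,b)|. -/
/-- For an `s`-well-separated pair `{A, B}` contained in a finite point set `P`, a point
`a ∈ A` and two distinct points `b, c ∈ B`, the perimeter of the triangle `Δ_{abc}` is at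
most `(1 + 2/s)` times the minimum perimeter `|Δ*(a,b)|` of a triangle on `a`, `b` with
third vertex in `P \ {a,b}`. -/
theorem triangle_approx_wspd {X : Type*} [MetricSpace X] (P A B : Set X) (hPfin : P.Finite)
    (s ρ : ℝ) (cA cB : X) (hs : 0 < s) (hρ : 0 < ρ)
    (hA : A ⊆ Metric.closedBall cA ρ) (hB : B ⊆ Metric.closedBall cB ρ)
    (hsep : (s + 2) * ρ ≤ dist cA cB)
    (hAP : A ⊆ P) (hBP : B ⊆ P)
    {a b c : X} (ha : a ∈ A) (hb : b ∈ B) (hc : c ∈ B) (hbc : b ≠ c)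
    (Δ : ℝ)
    (hΔ : IsLeast {L : ℝ | ∃ x ∈ P \ {a, b}, L = dist a b + dist b x + dist a x} Δ) :
    dist a b + dist b c + dist a c ≤ (1 + 2 / s) * Δ := by
  have haA : dist a cA ≤ ρ := Metric.mem_closedBall.mp (hA ha)
  have hbB : dist b cB ≤ ρ := Metric.mem_closedBall.mp (hB hb)
  have hcB : dist c cB ≤ ρ := Metric.mem_closedBall.mp (hB hc)
  -- dist a b ≥ s * ρ
  have hab : s * ρ ≤ dist a b := by
    have h1 : dist cA cB ≤ dist cA a + dist a b + dist b cB := dist_triangle4 cA a b cB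
    have h2 : dist cA a = dist a cA := dist_comm _ _
    nlinarith
  -- Δ ≥ 2 * dist a b
  obtain ⟨x, hx, hΔeq⟩ := hΔ.1
  have hΔge : 2 * dist a b ≤ Δ := by
    have := dist_triangle a x b
    have := dist_comm x b
    have := dist_comm a x
    nlinarith [dist_triangle b a x, dist_comm b a, dist_comm b x]
  have hbc2 : dist b c ≤ 2 * ρ := by
    have := dist_triangle b cB c
    have := dist_comm cB c
    linarith
  have hac : dist a c ≤ dist a b + dist b c := dist_triangle a b c
  have hΔpos : 2 * s * ρ ≤ Δ := by nlinarith
  have h4ρ : 4 * ρ ≤ (2 / s) * Δ := by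
    rw [div_mul_eq_mul_div, le_div_iff₀ hs]
    nlinarith
  nlinarith
end

section
/- Let {A, B} be an s-well-separated pair in a finite metric space P with |A| ≥ 2 and |B| ≥ 2. For any points a, a' ∈ A and b, b' ∈ B, the minimum-perimeter triangle containing a and b satisfies |Δ*(a,b)| ≤ (1 + 8/s)·|Δ*(a',b')|. -/
/-- For an `s`-well-separated pair `{A, B}` (with `|A| ≥ 2`, `|B| ≥ 2`, `s ≥ 1`) contained
in a finite point set `P`, and points `a, a' ∈ A`, `b, b' ∈ B`, the minimum-perimeter
triangles satisfy `|Δ*(a,b)| ≤ (1 + 8/s)·|Δ*(a',b')|`. -/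
theorem minTriangle_approx_wspd {X : Type*} [MetricSpace X] (P A B : Set X)
    (hPfin : P.Finite) (s ρ : ℝ) (cA cB : X) (hs : 0 < s) (hs1 : 1 ≤ s) (hρ : 0 < ρ)
    (hA : A ⊆ Metric.closedBall cA ρ) (hB : B ⊆ Metric.closedBall cB ρ)
    (hsep : (s + 2) * ρ ≤ dist cA cB)
    (hAP : A ⊆ P) (hBP : B ⊆ P)
    {a a' b b' : X} (ha : a ∈ A) (ha' : a' ∈ A) (hb : b ∈ B) (hb' : b' ∈ B)
    (haa' : a ≠ a') (hbb' : b ≠ b')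
    (Δ Δ' : ℝ)
    (hΔ : IsLeast {L : ℝ | ∃ x ∈ P \ {a, b}, L = dist a b + dist b x + dist a x} Δ)
    (hΔ' : IsLeast {L : ℝ | ∃ x ∈ P \ {a', b'}, L = dist a' b' + dist b' x + dist a' x} Δ') :
    Δ ≤ (1 + 8 / s) * Δ' := by
  -- distance between any point of A and any point of B is at least s * ρ
  have key : ∀ p ∈ A, ∀ q ∈ B, s * ρ ≤ dist p q := by
    intro p hp q hq
    have h1 : dist cA p ≤ ρ := by
      have := hA hp; rw [Metric.mem_closedBall, dist_comm] at this; exact this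
    have h2 : dist q cB ≤ ρ := hB hq
    have h3 : dist cA cB ≤ dist cA p + dist p q + dist q cB :=
      dist_triangle4 cA p q cB
    nlinarith
  have hsρ : 0 < s * ρ := mul_pos hs hρ
  have hAB : ∀ p ∈ A, ∀ q ∈ B, p ≠ q := by
    intro p hp q hq hpq
    have := key p hp q hq
    rw [hpq, dist_self] at this; linarith
  have hdiam : ∀ p ∈ A, ∀ q ∈ A, dist p q ≤ 2 * ρ := by
    intro p hp q hq
    have h1 := hA hp; have h2 := hA hq
    rw [Metric.mem_closedBall] at h1 h2
    have := dist_triangle p cA q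
    have := dist_comm cA q
    linarith
  have hdiamB : ∀ p ∈ B, ∀ q ∈ B, dist p q ≤ 2 * ρ := by
    intro p hp q hq
    have h1 := hB hp; have h2 := hB hq
    rw [Metric.mem_closedBall] at h1 h2
    have := dist_triangle p cB q
    have := dist_comm cB q
    linarith
  obtain ⟨x', ⟨hx'P, hx'ne⟩, hΔ'eq⟩ := hΔ'.1
  simp only [Set.mem_insert_iff, Set.mem_singleton_iff, not_or] at hx'ne
  obtain ⟨hx'a', hx'b'⟩ := hx'ne
  have hda'b' : s * ρ ≤ dist a' b' := key a' ha' b' hb'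
  have hΔ'lb : 2 * (s * ρ) ≤ Δ' := by
    have h1 := dist_triangle a' x' b'
    have h2 := dist_comm x' b'
    have h3 := dist_comm a' x'
    linarith
  have hΔ'nonneg : 0 ≤ Δ' := by nlinarith
  have h8ρ : 8 * ρ ≤ (8 / s) * Δ' := by
    rw [div_mul_eq_mul_div, le_div_iff₀ hs]
    nlinarith
  have expand : (1 + 8 / s) * Δ' = Δ' + (8 / s) * Δ' := by ring
  have haa'2 : dist a a' ≤ 2 * ρ := hdiam a ha a' ha'
  have hbb'2 : dist b b' ≤ 2 * ρ := hdiamB b hb b' hb'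
  by_cases hxa : x' = a
  · -- use a' as witness
    have hmem : a' ∈ P \ {a, b} := by
      refine ⟨hAP ha', ?_⟩
      simp only [Set.mem_insert_iff, Set.mem_singleton_iff, not_or]
      exact ⟨fun h => haa' h.symm, fun h => hAB a' ha' b hb h⟩
    have hΔle : Δ ≤ dist a b + dist b a' + dist a a' :=
      hΔ.2 ⟨a', hmem, rfl⟩
    rw [hxa] at hΔ'eq
    have t1 := dist_triangle a b' b
    have t2 := dist_triangle b b' a'
    have e1 := dist_comm b' b
    have e2 := dist_comm b' a'
    have e3 := dist_comm a b'
    have e4 := dist_comm a a'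
    linarith
  · by_cases hxb : x' = b
    · -- use b' as witness
      have hmem : b' ∈ P \ {a, b} := by
        refine ⟨hBP hb', ?_⟩
        simp only [Set.mem_insert_iff, Set.mem_singleton_iff, not_or]
        exact ⟨fun h => hAB a ha b' hb' h.symm, fun h => hbb' h.symm⟩
      have hΔle : Δ ≤ dist a b + dist b b' + dist a b' :=
        hΔ.2 ⟨b', hmem, rfl⟩
      rw [hxb] at hΔ'eq
      have t1 := dist_triangle a a' b
      have t2 := dist_triangle a a' b'
      have e1 := dist_comm b' b
      have e2 := dist_comm a' b
      linarith
    · -- use x' as witness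
      have hmem : x' ∈ P \ {a, b} := ⟨hx'P, by
        simp only [Set.mem_insert_iff, Set.mem_singleton_iff, not_or]
        exact ⟨hxa, hxb⟩⟩
      have hΔle : Δ ≤ dist a b + dist b x' + dist a x' :=
        hΔ.2 ⟨x', hmem, rfl⟩
      have t1 := dist_triangle4 a a' b' b
      have t2 := dist_triangle b b' x'
      have t3 := dist_triangle a a' x'
      have e1 := dist_comm b' b
      linarith
end

section
/- Let P be a finite metric space, p, q, r ∈ P distinct, and suppose r satisfies |pr| ≤ (1+ε₂)·|pp*| where p* is the nearest point to p in P \ {p,q}. If additionally |pr| > α·|pq| for α = 4/ε₁ with 0 < ε₁ < 2 and ε₂ = ε₁/2, then |Δ_{pqr}| ≤ (1+ε₁)·|Δ*(p,q)|. -/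
/-- Case 1 of the approximate minimum-perimeter triangle query: if `r` is a
`(1+ε₂)`-approximate nearest neighbour of `p` in `P \ {p,q}` (with `ε₂ = ε₁/2`) and
`|pr| > α·|pq|` with `α = 4/ε₁`, `0 < ε₁ < 2`, then `|Δ_{pqr}| ≤ (1+ε₁)·|Δ*(p,q)|`. -/
theorem approx_triangle_far_case {X : Type*} [MetricSpace X] (P : Set X) (hPfin : P.Finite)
    (p q r pstar : X) (hpq : p ≠ q) (hpr : p ≠ r) (hqr : q ≠ r)
    (ε₁ : ℝ) (hε₁ : 0 < ε₁) (hε₁' : ε₁ < 2)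
    (hstar_mem : pstar ∈ P \ {p, q})
    (hstar_min : ∀ x ∈ P \ {p, q}, dist p pstar ≤ dist p x)
    (hr_ann : dist p r ≤ (1 + ε₁ / 2) * dist p pstar)
    (hfar : (4 / ε₁) * dist p q < dist p r)
    (Δ : ℝ)
    (hΔ : IsLeast {L : ℝ | ∃ x ∈ P \ {p, q}, L = dist p q + dist q x + dist p x} Δ) :
    dist p q + dist q r + dist p r ≤ (1 + ε₁) * Δ := by
  obtain ⟨⟨x, hx, hΔeq⟩, -⟩ := hΔ
  have hpx : dist p pstar ≤ dist p x := hstar_min x hx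
  have htri : dist p x ≤ dist p q + dist q x := dist_triangle p q x
  have hΔge : 2 * dist p pstar ≤ Δ := by
    rw [hΔeq]; linarith
  have hs : (0:ℝ) ≤ dist p pstar := dist_nonneg
  have hqr' : dist q r ≤ dist q p + dist p r := dist_triangle q p r
  rw [dist_comm q p] at hqr'
  have hd : 4 * dist p q < ε₁ * dist p r := by
    have := (div_mul_eq_mul_div 4 ε₁ (dist p q)) ▸ hfar
    calc 4 * dist p q = (4 * dist p q / ε₁) * ε₁ := by field_simp
    _ < dist p r * ε₁ := by apply mul_lt_mul_of_pos_right this hε₁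
    _ = ε₁ * dist p r := mul_comm _ _
  nlinarith [dist_nonneg (x := p) (y := q), dist_nonneg (x := p) (y := r),
    mul_le_mul_of_nonneg_left hΔge (le_of_lt hε₁),
    mul_le_mul_of_nonneg_left hr_ann (le_of_lt hε₁)]
end

section
/- Let P be a finite metric space, p, q ∈ P distinct, with the third vertex x of a minimum-perimeter triangle Δ*(p,q). Let c be a point with |cx| ≤ δ, and let x_c ∈ P \ {p,q} satisfy |c x_c| ≤ (1+ε₂)·|c c*| where c* is the nearest point to c in P \ {p,q} and 0 ≤ ε₂ ≤ 1. Then |x x_c| ≤ 3δ and consequently |Δ_{p q x_c}| ≤ |Δ*(p,q)| + 6δ. -/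
/-- If `x` is the third vertex of a minimum-perimeter triangle `Δ*(p,q)`, `c` is a point
with `|cx| ≤ δ`, and `x_c` is a `(1+ε₂)`-approximate nearest neighbour of `c` in
`P \ {p,q}` with `0 ≤ ε₂ ≤ 1`, then `|x x_c| ≤ 3δ` and
`|Δ_{p q x_c}| ≤ |Δ*(p,q)| + 6δ`. -/
theorem approx_triangle_grid_case {X : Type*} [MetricSpace X] (P : Set X)
    (hPfin : P.Finite) (p q x c cstar xc : X) (hpq : p ≠ q)
    (ε₂ δ : ℝ) (hε₂0 : 0 ≤ ε₂) (hε₂1 : ε₂ ≤ 1)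
    (hx_mem : x ∈ P \ {p, q})
    (hx_min : ∀ y ∈ P \ {p, q},
      dist p q + dist q x + dist p x ≤ dist p q + dist q y + dist p y)
    (hcx : dist c x ≤ δ)
    (hcstar_mem : cstar ∈ P \ {p, q})
    (hcstar_min : ∀ y ∈ P \ {p, q}, dist c cstar ≤ dist c y)
    (hxc_mem : xc ∈ P \ {p, q})
    (hxc_ann : dist c xc ≤ (1 + ε₂) * dist c cstar) :
    dist x xc ≤ 3 * δ ∧
      dist p q + dist q xc + dist p xc ≤ (dist p q + dist q x + dist p x) + 6 * δ := by
  have h1 : dist c cstar ≤ δ := le_trans (hcstar_min x hx_mem) hcx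
  have h0 : (0:ℝ) ≤ δ := le_trans dist_nonneg hcx
  have h2 : dist c xc ≤ 2 * δ := by
    calc dist c xc ≤ (1 + ε₂) * dist c cstar := hxc_ann
      _ ≤ 2 * δ := by nlinarith [dist_nonneg (x := c) (y := cstar)]
  have h3 : dist x xc ≤ 3 * δ := by
    calc dist x xc ≤ dist x c + dist c xc := dist_triangle _ _ _
      _ ≤ 3 * δ := by rw [dist_comm x c] at *; linarith
  refine ⟨h3, ?_⟩
  have hq := dist_triangle q x xc
  have hp := dist_triangle p x xc
  linarith
end

section
/- Let P be a finite metric space and suppose for distinct points p, q ∈ P there is a third point r with |pr| ≤ α·|pq| for some α ≥ 2. Then the third vertex x of any minimum-perimeter triangle Δ*(p,q) satisfies |px| ≤ (3α/2)·|pq|. -/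
/-- If some third point `r ∈ P \ {p,q}` satisfies `|pr| ≤ α·|pq|` with `α ≥ 2`, then the
third vertex `x` of any minimum-perimeter triangle `Δ*(p,q)` satisfies
`|px| ≤ (3α/2)·|pq|`. -/
theorem minTriangle_vertex_in_box {X : Type*} [MetricSpace X] (P : Set X)
    (hPfin : P.Finite) (p q r x : X) (hpq : p ≠ q)
    (α : ℝ) (hα : 2 ≤ α)
    (hr_mem : r ∈ P \ {p, q}) (hr : dist p r ≤ α * dist p q)
    (hx_mem : x ∈ P \ {p, q})
    (hx_min : ∀ y ∈ P \ {p, q},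
      dist p q + dist q x + dist p x ≤ dist p q + dist q y + dist p y) :
    dist p x ≤ (3 * α / 2) * dist p q := by
  have h := hx_min r hr_mem
  have h1 : dist q r ≤ dist q p + dist p r := dist_triangle q p r
  have h2 : dist p x ≤ dist p q + dist q x := dist_triangle p q x
  have h3 : dist q p = dist p q := dist_comm q p
  have h4 : (0:ℝ) ≤ dist p q := dist_nonneg
  nlinarith
end

section
/- Let G = (V, E, w) be an undirected graph with edge weights w: E → [−M, M], and define w'(e) = w(e) + 8M. Then in the reweighted graph every simple cycle with at least 4 edges has w'-weight at least 28M, every triangle has w'-weight at most 27M, and hence any minimum w'-weight cycle is a triangle and it is a minimum w-weight triangle of G. -/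
/-- The weight of a cycle (closed walk) under an edge-weight function: the sum of the
weights of its edges. -/
noncomputable def cycleWeight {V : Type*} {G : SimpleGraph V} (w : Sym2 V → ℝ)
    {x : V} (c : G.Walk x x) : ℝ :=
  (c.edges.map w).sum

lemma list_sum_bounds {V : Type*} (w : Sym2 V → ℝ) (M : ℝ) (l : List (Sym2 V))
    (h : ∀ e ∈ l, -M ≤ w e ∧ w e ≤ M) :
    -(M * l.length) ≤ (l.map w).sum ∧ (l.map w).sum ≤ M * l.length := by
  induction l with
  | nil => simp
  | cons a t ih =>
    have ha := h a List.mem_cons_self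
    have iht := ih (fun e he => h e (List.mem_cons_of_mem a he))
    simp only [List.map_cons, List.sum_cons, List.length_cons]
    push_cast
    constructor <;> nlinarith [ha.1, ha.2, iht.1, iht.2]

lemma list_sum_shift {V : Type*} (w w' : Sym2 V → ℝ) (M : ℝ)
    (hw' : ∀ e, w' e = w e + 8 * M) (l : List (Sym2 V)) :
    (l.map w').sum = (l.map w).sum + 8 * M * l.length := by
  induction l with
  | nil => simp
  | cons a t ih =>
    simp only [List.map_cons, List.sum_cons, List.length_cons, hw', ih]
    push_cast
    ring

/-- Reweighting `w' = w + 8M` of a graph with weights in `[−M, M]`: every cycle with at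
least `4` edges has `w'`-weight at least `28M`, every triangle has `w'`-weight at most
`27M`, and hence a minimum `w'`-weight cycle is a triangle which is a minimum `w`-weight
triangle. -/
theorem minimum_cycle_reweighting {V : Type*} (G : SimpleGraph V)
    (w : Sym2 V → ℝ) (M : ℝ) (hM : 0 < M)
    (hw : ∀ e ∈ G.edgeSet, -M ≤ w e ∧ w e ≤ M)
    (w' : Sym2 V → ℝ) (hw' : ∀ e, w' e = w e + 8 * M)
    (htri : ∃ (z : V) (t : G.Walk z z), t.IsCycle ∧ t.length = 3) :
    (∀ (x : V) (c : G.Walk x x), c.IsCycle → 4 ≤ c.length →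
        28 * M ≤ cycleWeight w' c) ∧
    (∀ (x : V) (c : G.Walk x x), c.IsCycle → c.length = 3 →
        cycleWeight w' c ≤ 27 * M) ∧
    (∀ (x : V) (c : G.Walk x x), c.IsCycle →
      (∀ (y : V) (c' : G.Walk y y), c'.IsCycle → cycleWeight w' c ≤ cycleWeight w' c') →
        c.length = 3 ∧
          ∀ (y : V) (t : G.Walk y y), t.IsCycle → t.length = 3 →
            cycleWeight w c ≤ cycleWeight w t) := by
  have hedge : ∀ (x : V) (c : G.Walk x x), ∀ e ∈ c.edges, -M ≤ w e ∧ w e ≤ M := by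
    intro x c e he
    exact hw e (c.edges_subset_edgeSet he)
  have hlen : ∀ (x : V) (c : G.Walk x x), c.edges.length = c.length := by
    intro x c; exact c.length_edges
  have hshift : ∀ (x : V) (c : G.Walk x x),
      cycleWeight w' c = cycleWeight w c + 8 * M * c.length := by
    intro x c
    have := list_sum_shift w w' M hw' c.edges
    rw [hlen] at this
    exact this
  have hbounds : ∀ (x : V) (c : G.Walk x x),
      -(M * c.length) ≤ cycleWeight w c ∧ cycleWeight w c ≤ M * c.length := by
    intro x c
    have := list_sum_bounds w M c.edges (hedge x c)
    rw [hlen] at this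
    exact this
  have h1 : ∀ (x : V) (c : G.Walk x x), c.IsCycle → 4 ≤ c.length →
      28 * M ≤ cycleWeight w' c := by
    intro x c _ hl
    have hb := (hbounds x c).1
    rw [hshift]
    have h4 : (4 : ℝ) ≤ (c.length : ℝ) := by exact_mod_cast hl
    nlinarith
  have h2 : ∀ (x : V) (c : G.Walk x x), c.IsCycle → c.length = 3 →
      cycleWeight w' c ≤ 27 * M := by
    intro x c _ hl
    have hb := (hbounds x c).2
    rw [hl] at hb
    push_cast at hb
    rw [hshift, hl]
    push_cast
    nlinarith
  refine ⟨h1, h2, ?_⟩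
  intro x c hc hmin
  obtain ⟨z, t, ht, htl⟩ := htri
  have hct : cycleWeight w' c ≤ cycleWeight w' t := hmin z t ht
  have ht27 : cycleWeight w' t ≤ 27 * M := h2 z t ht htl
  have hc3 : c.length = 3 := by
    by_contra hne
    have h3 : 3 ≤ c.length := hc.three_le_length
    have h4 : 4 ≤ c.length := by omega
    have := h1 x c hc h4
    linarith
  refine ⟨hc3, ?_⟩
  intro y t' ht' htl'
  have := hmin y t' ht'
  rw [hshift x c, hshift y t', hc3, htl'] at this
  linarith
end
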